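/- arXiv:2006.07705 — 3 statements merged into one kernel-verified Lean document; each statement's English description precedes it below -/
import Mathlib

section
/- For every positive integer n and every integer k ≥ 1, we have (-1)^{k-1} ( Σ_{j=0}^{k-1} (-1)^j p(n - j(3j+5)/2 - 1) - N(n) ) ≥ 0, where N(n) is the number of partitions of n with non-negative rank; moreover the inequality is strict when n ≥ k(3k+5)/2 + 1. -/
open PowerSeries Finset

noncomputable instance : TopologicalSpace (PowerSeries ℚ) :=
  inferInstanceAs (TopologicalSpace ((Unit →₀ ℕ) → ℚ))

/-- The rank of a partition: largest part minus number of parts. -/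
def rank {n : ℕ} (P : n.Partition) : ℤ :=
  (P.parts.sup : ℤ) - (Multiset.card P.parts : ℤ)

/-- The crank of a partition. -/
def crank {n : ℕ} (P : n.Partition) : ℤ :=
  if P.parts.count 1 = 0 then (P.parts.sup : ℤ)
  else ((P.parts.filter (fun x => P.parts.count 1 < x)).card : ℤ) - (P.parts.count 1 : ℤ)

/-- The number of partitions of `n`. -/
noncomputable def p (n : ℕ) : ℕ := Nat.card n.Partition

/-- `p` extended to the integers by `0` on negatives. -/
noncomputable def pz (m : ℤ) : ℕ := if 0 ≤ m then p m.toNat else 0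

/-- The number of partitions of `n` with non-negative rank. -/
noncomputable def Nrank (n : ℕ) : ℕ := Nat.card {P : n.Partition // 0 ≤ rank P}

/-- The number of partitions of `n` with positive rank. -/
noncomputable def Rrank (n : ℕ) : ℕ := Nat.card {P : n.Partition // 0 < rank P}

/-- The number of Garden of Eden partitions of `n` (rank at most `-2`). -/
noncomputable def gePart (n : ℕ) : ℕ := Nat.card {P : n.Partition // rank P ≤ -2}

/-- The number of partitions of `n` with non-negative crank. -/
noncomputable def Ccrank (n : ℕ) : ℕ := Nat.card {P : n.Partition // 0 ≤ crank P}

/-- The number of partitions of `n` with positive crank. -/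
noncomputable def Dcrank (n : ℕ) : ℕ := Nat.card {P : n.Partition // 0 < crank P}

/-- The number of partitions of `n` in which `k` is the least positive integer that is not a
part and there are more parts greater than `k` than parts less than `k`. -/
noncomputable def Mk (k n : ℕ) : ℕ := Nat.card {P : n.Partition //
  (∀ i, 1 ≤ i → i < k → (i : ℕ) ∈ P.parts) ∧ (k : ℕ) ∉ P.parts ∧
  (P.parts.filter (fun x => x < k)).card < (P.parts.filter (fun x => k < x)).card}

/-- The number of partitions of `n` with no part divisible by 3. -/
noncomputable def p3 (n : ℕ) : ℕ := Nat.card {P : n.Partition // ∀ x ∈ P.parts, ¬ (3 ∣ x)}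

/-- The infinite product `(q;q)_∞` as a formal power series. -/
noncomputable def E : PowerSeries ℚ := ∏' i : ℕ, (1 - (X : PowerSeries ℚ) ^ (i + 1))

/-- The finite product `(q;q)_n` as a formal power series. -/
noncomputable def qPoch (n : ℕ) : PowerSeries ℚ :=
  ∏ i ∈ range n, (1 - (X : PowerSeries ℚ) ^ (i + 1))

/-
Dyson's map, which deletes the largest part `λ₁` of a partition with `ℓ` parts, adds one to each
remaining part and appends `λ₁ - r - ℓ` parts equal to one, is a bijection from the partitions of
`m` with rank at least `r` onto the partitions of `m - r - 1` with rank at most `r + 2`. Writing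
`N_{≥r}(m)` for the number of partitions of `m` with rank at least `r`, and counting the complement,
`N_{≥r}(m) + N_{≥r+3}(m - r - 1) = p(m - r - 1)`. Starting from `N(n) = N_{≥0}(n)` and applying
this with `r = 0, 3, 6, …` telescopes into the alternating sum, with remainder
`(-1)^k N_{≥3k}(n - k(3k-1)/2)`; this is nonnegative, and positive as soon as the partition of
`n - k(3k-1)/2` into one part has rank at least `3k`.
-/

namespace Multiset

lemma sup_mem_of_ne_zero {α : Type*} [LinearOrder α] [OrderBot α] {s : Multiset α}
    (hs : s ≠ 0) : s.sup ∈ s := by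
  induction s using Multiset.induction with
  | empty => exact absurd rfl hs
  | cons a t ih =>
    rw [Multiset.sup_cons]
    rcases eq_or_ne t 0 with rfl | ht
    · simp
    rcases le_total a t.sup with h | h
    · rw [sup_eq_right.2 h]
      exact mem_cons_of_mem (ih ht)
    · rw [sup_eq_left.2 h]
      exact mem_cons_self a t

lemma sum_map_add_one (s : Multiset ℕ) : (s.map (· + 1)).sum = s.sum + s.card := by
  simp [sum_map_add]

lemma sum_map_sub_one {s : Multiset ℕ} (hs : ∀ x ∈ s, 0 < x) :
    (s.map (· - 1)).sum = s.sum - s.card := by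
  simpa using sum_map_tsub s (f := id) (g := fun _ => 1) hs

end Multiset

open Multiset

namespace Dyson

variable (r : ℕ) {s t : Multiset ℕ}

def fwd (s : Multiset ℕ) : Multiset ℕ :=
  (s.erase s.sup).map (· + 1) + replicate (s.sup - r - 1 - (s.erase s.sup).card) 1

def bwd (t : Multiset ℕ) : Multiset ℕ :=
  (t.card + r + 1) ::ₘ (t.filter (· ≠ 1)).map (· - 1)

variable {r}

lemma fwd_pos : ∀ x ∈ fwd r s, 0 < x := by
  intro x hx
  rcases mem_add.1 hx with hx | hx
  · obtain ⟨y, -, rfl⟩ := Multiset.mem_map.1 hx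
    exact y.succ_pos
  · rw [eq_of_mem_replicate hx]
    exact one_pos

lemma sup_fwd_le : (fwd r s).sup ≤ s.sup + 1 := by
  refine Multiset.sup_le.2 fun x hx => ?_
  rcases mem_add.1 hx with hx | hx
  · obtain ⟨y, hy, rfl⟩ := Multiset.mem_map.1 hx
    exact Nat.succ_le_succ (le_sup (mem_of_mem_erase hy))
  · rw [eq_of_mem_replicate hx]
    omega

section

variable (hs : s.sup ∈ s) (hr : r + s.card ≤ s.sup)
include hs hr

lemma card_fwd : (fwd r s).card = s.sup - r - 1 := by
  have := card_erase_add_one hs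
  simp only [fwd, Multiset.card_add, Multiset.card_map, Multiset.card_replicate]
  omega

lemma sum_fwd : (fwd r s).sum = s.sum - r - 1 := by
  have := card_erase_add_one hs
  have := sum_erase hs
  simp only [fwd, Multiset.sum_add, sum_map_add_one, Multiset.sum_replicate, smul_eq_mul, mul_one]
  omega

lemma sup_fwd_le_card_fwd_add : (fwd r s).sup ≤ (fwd r s).card + r + 2 := by
  have := card_pos_iff_exists_mem.2 ⟨_, hs⟩
  have := sup_fwd_le (r := r) (s := s)
  rw [card_fwd hs hr]
  omega

lemma bwd_fwd (hpos : ∀ x ∈ s, 0 < x) : bwd r (fwd r s) = s := by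
  have hfilter : (fwd r s).filter (· ≠ 1) = (s.erase s.sup).map (· + 1) := by
    rw [fwd, Multiset.filter_add, Multiset.filter_eq_self.2, Multiset.filter_eq_nil.2, add_zero]
    · intro x hx
      rw [eq_of_mem_replicate hx]
      exact not_not.2 rfl
    · intro x hx
      obtain ⟨y, hy, rfl⟩ := Multiset.mem_map.1 hx
      have := hpos y (mem_of_mem_erase hy)
      omega
  have hsup : (fwd r s).card + r + 1 = s.sup := by
    have := card_pos_iff_exists_mem.2 ⟨_, hs⟩
    rw [card_fwd hs hr]
    omega
  rw [bwd, hsup, hfilter, Multiset.map_map]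
  simp [cons_erase hs]

end

lemma filter_eq_one_eq_replicate (t : Multiset ℕ) :
    t.filter (¬ · ≠ 1) = replicate (t.filter (¬ · ≠ 1)).card 1 :=
  eq_replicate_card.2 fun _ hx => by simpa using (Multiset.mem_filter.1 hx).2

section

variable (hpos : ∀ x ∈ t, 0 < x)
include hpos

lemma bwd_pos : ∀ x ∈ bwd r t, 0 < x := by
  intro x hx
  rcases Multiset.mem_cons.1 hx with rfl | hx
  · omega
  · obtain ⟨y, hy, rfl⟩ := Multiset.mem_map.1 hx
    have := hpos y (Multiset.mem_filter.1 hy).1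
    have := (Multiset.mem_filter.1 hy).2
    omega

lemma sum_bwd : (bwd r t).sum = t.sum + r + 1 := by
  have hsplit := filter_add_not (· ≠ 1) t
  have hsum := congrArg Multiset.sum hsplit
  have hcard := congrArg Multiset.card hsplit
  have hones : (t.filter (¬ · ≠ 1)).sum = (t.filter (¬ · ≠ 1)).card := by
    rw [filter_eq_one_eq_replicate t]
    simp
  have hpos' : ∀ x ∈ t.filter (· ≠ 1), 0 < x := fun x hx => hpos x (Multiset.mem_filter.1 hx).1
  have hle : (t.filter (· ≠ 1)).card ≤ (t.filter (· ≠ 1)).sum := by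
    simpa using card_nsmul_le_sum hpos'
  rw [Multiset.sum_add] at hsum
  rw [Multiset.card_add] at hcard
  rw [bwd, Multiset.sum_cons, sum_map_sub_one hpos']
  omega

end

section

variable (hsup : t.sup ≤ t.card + r + 2)
include hsup

lemma sup_bwd : (bwd r t).sup = t.card + r + 1 := by
  rw [bwd, Multiset.sup_cons, sup_eq_left]
  refine Multiset.sup_le.2 fun x hx => ?_
  obtain ⟨y, hy, rfl⟩ := Multiset.mem_map.1 hx
  have := le_sup (Multiset.mem_filter.1 hy).1
  omega

lemma add_card_bwd_le_sup_bwd : r + (bwd r t).card ≤ (bwd r t).sup := by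
  rw [sup_bwd hsup, bwd, Multiset.card_cons, Multiset.card_map]
  have := Multiset.card_le_card (Multiset.filter_le (· ≠ 1) t)
  omega

lemma fwd_bwd (hpos : ∀ x ∈ t, 0 < x) : fwd r (bwd r t) = t := by
  have hsplit := filter_add_not (· ≠ 1) t
  have hcard := congrArg Multiset.card hsplit
  rw [Multiset.card_add] at hcard
  have hid : (t.filter (· ≠ 1)).map ((· + 1) ∘ (· - 1)) = t.filter (· ≠ 1) := by
    conv_rhs => rw [← Multiset.map_id (t.filter (· ≠ 1))]
    refine Multiset.map_congr rfl fun x hx => ?_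
    have := hpos x (Multiset.mem_filter.1 hx).1
    simp only [Function.comp_apply, id_eq]
    omega
  rw [fwd, sup_bwd hsup, bwd, erase_cons_head, Multiset.map_map, Multiset.card_map, hid]
  conv_rhs => rw [← hsplit, filter_eq_one_eq_replicate t]
  congr 2
  omega

end

end Dyson

namespace Nat.Partition

variable {m : ℕ} (P : m.Partition)

lemma sup_parts_mem (hm : 0 < m) : P.parts.sup ∈ P.parts := by
  refine sup_mem_of_ne_zero fun h => ?_
  have := P.parts_sum
  rw [h, Multiset.sum_zero] at this
  omega

lemma cast_le_rank_iff (r : ℕ) : (r : ℤ) ≤ rank P ↔ r + P.parts.card ≤ P.parts.sup := by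
  unfold rank
  omega

lemma rank_le_cast_add_two_iff (r : ℕ) :
    rank P ≤ r + 2 ↔ P.parts.sup ≤ P.parts.card + r + 2 := by
  unfold rank
  omega

lemma rank_lt (hm : 0 < m) : rank P < m := by
  have hsup : P.parts.sup ≤ m :=
    Multiset.sup_le.2 fun _ hx => (le_sum_of_mem hx).trans_eq P.parts_sum
  have := card_pos_iff_exists_mem.2 ⟨_, P.sup_parts_mem hm⟩
  unfold rank
  omega

end Nat.Partition

open Nat.Partition in
def Dyson.equiv {r m : ℕ} (hm : r < m) :
    {P : m.Partition // (r : ℤ) ≤ rank P} ≃ {Q : (m - r - 1).Partition // rank Q ≤ r + 2} where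
  toFun P :=
    have hs := P.1.sup_parts_mem (by omega)
    have hr := (P.1.cast_le_rank_iff r).1 P.2
    ⟨⟨fwd r P.1.parts, fun hx => fwd_pos _ hx, by rw [sum_fwd hs hr, P.1.parts_sum]⟩,
      (rank_le_cast_add_two_iff _ r).2 (sup_fwd_le_card_fwd_add hs hr)⟩
  invFun Q :=
    have hpos : ∀ x ∈ Q.1.parts, 0 < x := fun _ hx => Q.1.parts_pos hx
    have hsup := (Q.1.rank_le_cast_add_two_iff r).1 Q.2
    ⟨⟨bwd r Q.1.parts, fun hx => bwd_pos hpos _ hx, by rw [sum_bwd hpos, Q.1.parts_sum]; omega⟩,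
      (cast_le_rank_iff _ r).2 (add_card_bwd_le_sup_bwd hsup)⟩
  left_inv P := Subtype.ext <| Nat.Partition.ext <|
    bwd_fwd (P.1.sup_parts_mem (by omega)) ((P.1.cast_le_rank_iff r).1 P.2)
      fun _ hx => P.1.parts_pos hx
  right_inv Q := Subtype.ext <| Nat.Partition.ext <|
    fwd_bwd ((Q.1.rank_le_cast_add_two_iff r).1 Q.2) fun _ hx => Q.1.parts_pos hx

lemma card_rankGe_eq_zero {r m : ℕ} (hr : 0 < r) (h : m ≤ r) :
    Nat.card {P : m.Partition // (r : ℤ) ≤ rank P} = 0 := by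
  suffices IsEmpty {P : m.Partition // (r : ℤ) ≤ rank P} from Nat.card_of_isEmpty
  refine ⟨fun P => ?_⟩
  rcases Nat.eq_zero_or_pos m with rfl | hm
  · have : rank P.1 = 0 := by simp [rank]
    have := P.2
    omega
  · have := P.1.rank_lt hm
    have := P.2
    omega

lemma card_rankGe_add_card_rankGe {r m : ℕ} (hm : r < m) :
    Nat.card {P : m.Partition // (r : ℤ) ≤ rank P}
      + Nat.card {Q : (m - r - 1).Partition // ((r + 3 : ℕ) : ℤ) ≤ rank Q} = p (m - r - 1) := by
  classical
  have hcompl : ∀ Q : (m - r - 1).Partition, ((r + 3 : ℕ) : ℤ) ≤ rank Q ↔ ¬ rank Q ≤ r + 2 := by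
    intro Q
    push_cast
    omega
  rw [Nat.card_congr (Dyson.equiv hm), Nat.card_congr (Equiv.subtypeEquivRight hcompl),
    ← Nat.card_sum, Nat.card_congr (Equiv.sumCompl _), p]

/-- `N_{≥r}(m)`. The empty partition of `0` is not counted, so that
`rankGeCount_add_rankGeCount` holds for all `m`, also when `r = 0`. -/
noncomputable def rankGeCount (r : ℕ) (m : ℤ) : ℕ :=
  if 0 < m then Nat.card {P : m.toNat.Partition // (r : ℤ) ≤ rank P} else 0

lemma rankGeCount_natCast {r m : ℕ} (h : 0 < r ∨ 0 < m) :
    rankGeCount r m = Nat.card {P : m.Partition // (r : ℤ) ≤ rank P} := by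
  rcases Nat.eq_zero_or_pos m with rfl | hm
  · rw [rankGeCount, if_neg (by simp), card_rankGe_eq_zero (by omega) (Nat.zero_le r)]
  · rw [rankGeCount, if_pos (by exact_mod_cast hm), Int.toNat_natCast]

lemma rankGeCount_add_rankGeCount (r : ℕ) (m : ℤ) :
    rankGeCount r m + rankGeCount (r + 3) (m - r - 1) = pz (m - r - 1) := by
  by_cases hm : (r : ℤ) < m
  · lift m to ℕ using by omega
    have hm : r < m := by exact_mod_cast hm
    rw [show (m : ℤ) - r - 1 = ((m - r - 1 : ℕ) : ℤ) by omega, rankGeCount_natCast (by omega),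
      rankGeCount_natCast (by omega), pz, if_pos (Nat.cast_nonneg _), Int.toNat_natCast]
    exact card_rankGe_add_card_rankGe hm
  · have hlow : rankGeCount r m = 0 := by
      unfold rankGeCount
      split_ifs with hpos
      · exact card_rankGe_eq_zero (by omega) (by omega)
      · rfl
    rw [hlow, rankGeCount, if_neg (by omega), pz, if_neg (by omega)]

lemma natCast_pentagonal_add_one (k : ℤ) :
    (pentagonal (k + 1) : ℤ) = pentagonal k + 3 * k + 1 := by
  linarith [two_mul_natCast_pentagonal (k + 1), two_mul_natCast_pentagonal k]

lemma natCast_pentagonal_add_one_eq_ediv (k : ℤ) :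
    (pentagonal (k + 1) : ℤ) = k * (3 * k + 5) / 2 + 1 := by
  have h : k * (3 * k + 5) = 2 * ((pentagonal (k + 1) : ℤ) - 1) := by
    linarith [two_mul_natCast_pentagonal (k + 1)]
  rw [h, Int.mul_ediv_cancel_left _ two_ne_zero]
  ring

lemma Nrank_eq_sum_add_rankGeCount {n : ℕ} (hn : 0 < n) (k : ℕ) :
    (Nrank n : ℤ) = ∑ j ∈ range k, (-1) ^ j * (pz (n - pentagonal (j + 1)) : ℤ)
      + (-1) ^ k * rankGeCount (3 * k) (n - pentagonal k) := by
  induction k with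
  | zero =>
    have : pentagonal 0 = 0 := by simp [pentagonal_def]
    simp [this, rankGeCount_natCast (r := 0) (Or.inr hn), Nrank]
  | succ k ih =>
    have h := congrArg (Nat.cast : ℕ → ℤ) (rankGeCount_add_rankGeCount (3 * k) (n - pentagonal k))
    rw [show (n : ℤ) - pentagonal k - (3 * k : ℕ) - 1 = n - pentagonal (k + 1) by
      rw [natCast_pentagonal_add_one]; push_cast; ring] at h
    push_cast at h ⊢
    rw [ih, sum_range_succ, show 3 * (k + 1) = 3 * k + 3 by ring]
    linear_combination (-1 : ℤ) ^ k * h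

lemma rankGeCount_pos {r : ℕ} {m : ℤ} (h : (r : ℤ) < m) : 0 < rankGeCount r m := by
  lift m to ℕ using by omega
  have hm : r < m := by exact_mod_cast h
  rw [rankGeCount_natCast (by omega)]
  have : Nonempty {P : m.Partition // (r : ℤ) ≤ rank P} :=
    ⟨⟨Nat.Partition.indiscrete m, by
      simp only [rank, Nat.Partition.indiscrete_parts (by omega : m ≠ 0), Multiset.sup_singleton,
        Multiset.card_singleton]
      omega⟩⟩
  exact Nat.card_pos

theorem stmt2 (n k : ℕ) (hn : 0 < n) (hk : 1 ≤ k) :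
    0 ≤ (-1 : ℤ) ^ (k - 1) *
      ((∑ j ∈ range k, (-1 : ℤ) ^ j * (pz ((n : ℤ) - (j * (3 * j + 5)) / 2 - 1) : ℤ)) -
        (Nrank n : ℤ)) ∧
    (n ≥ k * (3 * k + 5) / 2 + 1 →
      0 < (-1 : ℤ) ^ (k - 1) *
        ((∑ j ∈ range k, (-1 : ℤ) ^ j * (pz ((n : ℤ) - (j * (3 * j + 5)) / 2 - 1) : ℤ)) -
          (Nrank n : ℤ))) := by
  obtain ⟨k, rfl⟩ : ∃ k', k = k' + 1 := ⟨k - 1, by omega⟩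
  have hshift (j : ℕ) : (n : ℤ) - (j * (3 * j + 5)) / 2 - 1 = n - pentagonal (j + 1) := by
    rw [natCast_pentagonal_add_one_eq_ediv]
    ring
  have hsq : ((-1 : ℤ) ^ k) ^ 2 = 1 := by rw [← pow_mul, pow_mul', neg_one_sq, one_pow]
  have key : (-1 : ℤ) ^ (k + 1 - 1) *
      ((∑ j ∈ range (k + 1), (-1 : ℤ) ^ j * (pz ((n : ℤ) - (j * (3 * j + 5)) / 2 - 1) : ℤ)) -
        (Nrank n : ℤ)) = rankGeCount (3 * (k + 1)) (n - pentagonal (k + 1)) := by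
    rw [Nrank_eq_sum_add_rankGeCount hn (k + 1)]
    simp only [hshift, Nat.add_sub_cancel]
    push_cast
    linear_combination (rankGeCount (3 * (k + 1)) (n - pentagonal (k + 1)) : ℤ) * hsq
  refine ⟨key ▸ Nat.cast_nonneg _, fun hge => key ▸ Nat.cast_pos.2 (rankGeCount_pos ?_)⟩
  have := natCast_pentagonal_add_one_eq_ediv (k + 1)
  have := natCast_pentagonal_add_one (k + 1)
  zify at hge
  push_cast at hge ⊢
  omega
end

section
/- For every integer k ≥ 1, as formal power series: (1/(q;q)_∞) Σ_{n=0}^{k-1} (-1)^n q^{n(n+1)/2} = Σ_{n=0}^∞ q^{n(n+1)}/((q;q)_n)^2 + (-1)^{k-1} q^{k(k+1)/2} Σ_{n=0}^∞ q^{n(n+k+1)} / ((q;q)_n (q;q)_{n+k}). -/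
open PowerSeries Finset

/-!
Write `D(j, m) = ∑ₙ q^{n(n+j)} / ((q;q)ₙ (q;q)_{n+m})`. Clearing denominators termwise gives
`D(j, m+1) = D(j, m) + q^{m+1} D(j+1, m+1)` and, after shifting `n`,
`D(j, m) = D(j+1, m) + q^{j+1} D(j+2, m+1)`. Together they give `D(m, m) = D(m+1, m+1)`; since
`D(m, m) ≡ 1/(q;q)ₘ ≡ 1/(q;q)_∞` modulo `q^{m+1}`, every `D(m, m)` equals `1/(q;q)_∞` (Durfee
rectangles). Hence `D(k+1, k) = 1/(q;q)_∞ - q^{k+1} D(k+2, k+1)`, and unfolding `D(1, 0)` this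
way `k` times yields the identity.
-/

-- The topology fixed on `ℚ⟦X⟧` above is Mathlib's coefficientwise one.
instance : T2Space ℚ⟦X⟧ := PowerSeries.WithPiTopology.instT2Space ℚ

instance : IsTopologicalRing ℚ⟦X⟧ := PowerSeries.WithPiTopology.instIsTopologicalRing ℚ

namespace PowerSeries

open scoped WithPiTopology

variable {R : Type*}

theorem summable_of_X_pow_dvd [Semiring R] [TopologicalSpace R] {f : ℕ → R⟦X⟧}
    (hf : ∀ n, X ^ n ∣ f n) : Summable f :=
  (WithPiTopology.summable_iff_summable_coeff R).2 fun d ↦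
    summable_of_ne_finset_zero (s := range (d + 1)) fun n hn ↦
      X_pow_dvd_iff.1 (hf n) d (by simpa using hn)

theorem X_pow_dvd_tsum [Semiring R] [TopologicalSpace R] [T2Space R] {ι : Type*}
    {f : ι → R⟦X⟧} {N : ℕ} (hf : ∀ i, X ^ N ∣ f i) : X ^ N ∣ ∑' i, f i := by
  by_cases hs : Summable f
  · refine X_pow_dvd_iff.2 fun d hd ↦ ?_
    have hsum := (WithPiTopology.hasSum_iff_hasSum_coeff R).1 hs.hasSum d
    simp only [X_pow_dvd_iff.1 (hf _) d hd] at hsum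
    exact hsum.unique hasSum_zero
  · rw [tsum_eq_zero_of_not_summable hs]
    exact dvd_zero _

theorem isClosed_setOf_X_pow_dvd_sub [Ring R] [TopologicalSpace R] [T2Space R] (N : ℕ)
    (g : R⟦X⟧) : IsClosed {f : R⟦X⟧ | X ^ N ∣ f - g} := by
  simp only [X_pow_dvd_iff, map_sub, sub_eq_zero, Set.ofPred_forall]
  exact isClosed_iInter fun d ↦ isClosed_iInter fun _ ↦
    isClosed_eq (WithPiTopology.continuous_coeff R d) continuous_const

theorem eq_of_forall_X_pow_dvd_sub [Ring R] {a b : R⟦X⟧} (h : ∀ N, X ^ N ∣ a - b) : a = b := by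
  ext d
  rw [← sub_eq_zero, ← map_sub]
  exact X_pow_dvd_iff.1 (h (d + 1)) d d.lt_succ_self

theorem X_pow_dvd_inv_sub_inv {k : Type*} [Field k] {a b : k⟦X⟧} {N : ℕ}
    (ha : constantCoeff a ≠ 0) (hb : constantCoeff b ≠ 0) (h : X ^ N ∣ a - b) :
    X ^ N ∣ a⁻¹ - b⁻¹ := by
  have hinv : a⁻¹ - b⁻¹ = a⁻¹ * b⁻¹ * (b - a) := by
    linear_combination
      b⁻¹ * PowerSeries.inv_mul_cancel a ha - a⁻¹ * PowerSeries.mul_inv_cancel b hb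
  rw [hinv]
  exact (dvd_sub_comm.1 h).mul_left _

end PowerSeries

open PowerSeries

theorem qPoch_zero : qPoch 0 = 1 := prod_range_zero _

theorem qPoch_succ (n : ℕ) : qPoch (n + 1) = qPoch n * (1 - X ^ (n + 1)) := prod_range_succ _ _

theorem constantCoeff_qPoch (n : ℕ) : constantCoeff (qPoch n) = 1 := by
  simp [qPoch, map_prod]

theorem one_sub_X_pow_succ_mul_inv (n : ℕ) :
    (1 - X ^ (n + 1) : ℚ⟦X⟧) * (1 - X ^ (n + 1))⁻¹ = 1 :=
  PowerSeries.mul_inv_cancel _ (by simp)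

theorem inv_qPoch_succ (n : ℕ) : (qPoch (n + 1))⁻¹ = (1 - X ^ (n + 1))⁻¹ * (qPoch n)⁻¹ := by
  rw [qPoch_succ, PowerSeries.mul_inv_rev]

theorem X_pow_dvd_qPoch_sub {m N : ℕ} (h : m ≤ N) : X ^ (m + 1) ∣ qPoch N - qPoch m := by
  induction N, h using Nat.le_induction with
  | base => simp
  | succ N hmN ih =>
    rw [qPoch_succ, show qPoch N * (1 - X ^ (N + 1)) - qPoch m =
      (qPoch N - qPoch m) - X ^ (N + 1) * qPoch N by ring]
    exact dvd_sub ih ((pow_dvd_pow X (by omega)).mul_right _)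

theorem X_pow_dvd_E_sub_qPoch (m : ℕ) : X ^ (m + 1) ∣ E - qPoch m :=
  (isClosed_setOf_X_pow_dvd_sub (m + 1) (qPoch m)).mem_of_tendsto
    (WithPiTopology.multipliable_one_sub_X_pow ℚ).hasProd.tendsto_prod_nat
    ((Filter.eventually_ge_atTop m).mono fun _ ↦ X_pow_dvd_qPoch_sub)

theorem constantCoeff_E : constantCoeff E = 1 := by
  have h := X_pow_dvd_E_sub_qPoch 0
  rwa [zero_add, pow_one, X_dvd_iff, map_sub, qPoch_zero, map_one, sub_eq_zero] at h

theorem X_pow_dvd_inv_E_sub_inv_qPoch (m : ℕ) : X ^ (m + 1) ∣ E⁻¹ - (qPoch m)⁻¹ :=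
  X_pow_dvd_inv_sub_inv (by simp [constantCoeff_E]) (by simp [constantCoeff_qPoch])
    (X_pow_dvd_E_sub_qPoch m)

noncomputable def durfeeTerm (j m n : ℕ) : ℚ⟦X⟧ :=
  X ^ (n * (n + j)) * (qPoch n * qPoch (n + m))⁻¹

noncomputable def durfeeSeries (j m : ℕ) : ℚ⟦X⟧ := ∑' n, durfeeTerm j m n

theorem durfeeTerm_zero (j m : ℕ) : durfeeTerm j m 0 = (qPoch m)⁻¹ := by
  simp [durfeeTerm, qPoch_zero]

theorem X_pow_dvd_durfeeTerm (j m n : ℕ) : X ^ (n * (n + j)) ∣ durfeeTerm j m n :=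
  dvd_mul_right _ _

theorem summable_durfeeTerm (j m : ℕ) : Summable (durfeeTerm j m) :=
  summable_of_X_pow_dvd fun n ↦
    (pow_dvd_pow X ((Nat.le_mul_self n).trans (Nat.mul_le_mul_left n (Nat.le_add_right n j)))).trans
      (X_pow_dvd_durfeeTerm j m n)

theorem durfeeTerm_succ_right (j m n : ℕ) :
    durfeeTerm j (m + 1) n = durfeeTerm j m n + X ^ (m + 1) * durfeeTerm (j + 1) (m + 1) n := by
  simp only [durfeeTerm, PowerSeries.mul_inv_rev, ← add_assoc n m 1, inv_qPoch_succ]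
  linear_combination (X ^ (n * (n + j)) * (qPoch n)⁻¹ * (qPoch (n + m))⁻¹) *
    one_sub_X_pow_succ_mul_inv (n + m)

theorem durfeeTerm_succ (j m n : ℕ) :
    durfeeTerm j m (n + 1) =
      durfeeTerm (j + 1) m (n + 1) + X ^ (j + 1) * durfeeTerm (j + 2) (m + 1) n := by
  simp only [durfeeTerm, PowerSeries.mul_inv_rev, add_right_comm n 1 m, inv_qPoch_succ n]
  linear_combination (X ^ ((n + 1) * (n + 1 + j)) * (qPoch (n + m + 1))⁻¹ * (qPoch n)⁻¹) *
    one_sub_X_pow_succ_mul_inv n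

theorem durfeeSeries_succ_right (j m : ℕ) :
    durfeeSeries j (m + 1) = durfeeSeries j m + X ^ (m + 1) * durfeeSeries (j + 1) (m + 1) := by
  simp only [durfeeSeries, durfeeTerm_succ_right j m]
  rw [(summable_durfeeTerm j m).tsum_add ((summable_durfeeTerm _ _).mul_left _),
    (summable_durfeeTerm _ _).tsum_mul_left]

theorem durfeeSeries_eq_succ_left (j m : ℕ) :
    durfeeSeries j m = durfeeSeries (j + 1) m + X ^ (j + 1) * durfeeSeries (j + 2) (m + 1) := by
  simp only [durfeeSeries]
  rw [(summable_durfeeTerm j m).tsum_eq_zero_add,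
    (summable_durfeeTerm (j + 1) m).tsum_eq_zero_add]
  simp only [durfeeTerm_succ j m, durfeeTerm_zero]
  rw [((summable_nat_add_iff 1).2 (summable_durfeeTerm _ _)).tsum_add
    ((summable_durfeeTerm _ _).mul_left _), (summable_durfeeTerm _ _).tsum_mul_left]
  ring

theorem durfeeSeries_succ_self (m : ℕ) : durfeeSeries (m + 1) (m + 1) = durfeeSeries m m := by
  rw [durfeeSeries_eq_succ_left m m, durfeeSeries_succ_right]

theorem X_pow_dvd_durfeeSeries_self_sub (m : ℕ) :
    X ^ (m + 1) ∣ durfeeSeries m m - (qPoch m)⁻¹ := by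
  rw [durfeeSeries, (summable_durfeeTerm m m).tsum_eq_zero_add, durfeeTerm_zero,
    add_sub_cancel_left]
  exact X_pow_dvd_tsum fun n ↦
    (pow_dvd_pow X (by nlinarith)).trans (X_pow_dvd_durfeeTerm m m (n + 1))

theorem durfeeSeries_self (m : ℕ) : durfeeSeries m m = E⁻¹ := by
  have hconst : ∀ M, durfeeSeries M M = durfeeSeries 0 0 :=
    Nat.rec rfl fun M ih ↦ (durfeeSeries_succ_self M).trans ih
  refine (hconst m).trans (eq_of_forall_X_pow_dvd_sub fun N ↦ ?_)
  have h := dvd_sub (X_pow_dvd_durfeeSeries_self_sub N) (X_pow_dvd_inv_E_sub_inv_qPoch N)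
  rw [sub_sub_sub_cancel_right, hconst] at h
  exact (pow_dvd_pow X N.le_succ).trans h

theorem durfeeSeries_add_X_pow_mul_eq_inv_E (k : ℕ) :
    durfeeSeries (k + 1) k + X ^ (k + 1) * durfeeSeries (k + 2) (k + 1) = E⁻¹ := by
  rw [← durfeeSeries_succ_right, durfeeSeries_self]

theorem triangle_succ (k : ℕ) : (k + 1) * (k + 1 + 1) / 2 = k * (k + 1) / 2 + (k + 1) := by
  rw [show (k + 1) * (k + 1 + 1) = k * (k + 1) + 2 * (k + 1) by ring,
    Nat.add_mul_div_left _ _ two_pos]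

theorem durfeeSeries_one_zero_eq (k : ℕ) :
    durfeeSeries 1 0 =
      E⁻¹ * ∑ n ∈ range k, ((-1 : ℚ) ^ n) • (X : ℚ⟦X⟧) ^ (n * (n + 1) / 2) +
        ((-1 : ℚ) ^ k) • (X ^ (k * (k + 1) / 2) * durfeeSeries (k + 1) k) := by
  induction k with
  | zero => simp
  | succ k ih =>
    rw [sum_range_succ, triangle_succ]
    simp only [smul_eq_C_mul, map_pow, map_neg, map_one] at ih ⊢
    linear_combination
      ih + (-1) ^ k * X ^ (k * (k + 1) / 2) * durfeeSeries_add_X_pow_mul_eq_inv_E k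

theorem stmt12 (k : ℕ) (hk : 1 ≤ k) :
    E⁻¹ * (∑ n ∈ range k, ((-1 : ℚ) ^ n) • (X : PowerSeries ℚ) ^ (n * (n + 1) / 2)) =
      (∑' n : ℕ, (X : PowerSeries ℚ) ^ (n * (n + 1)) * ((qPoch n) ^ 2)⁻¹) +
        ((-1 : ℚ) ^ (k - 1)) • ((X : PowerSeries ℚ) ^ (k * (k + 1) / 2) *
          ∑' n : ℕ, (X : PowerSeries ℚ) ^ (n * (n + k + 1)) * (qPoch n * qPoch (n + k))⁻¹) := by
  have hsign : (-1 : ℚ) ^ (k - 1) = -(-1) ^ k := by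
    obtain ⟨k, rfl⟩ := Nat.exists_eq_add_of_le' hk
    simp [pow_succ]
  have hD10 : ∑' n : ℕ, X ^ (n * (n + 1)) * ((qPoch n) ^ 2)⁻¹ = durfeeSeries 1 0 := by
    simp only [durfeeSeries, durfeeTerm, add_zero, sq]
  have hDk : ∑' n : ℕ, X ^ (n * (n + k + 1)) * (qPoch n * qPoch (n + k))⁻¹ =
      durfeeSeries (k + 1) k := rfl
  rw [hD10, hDk, durfeeSeries_one_zero_eq k, hsign, neg_smul]
  abel
end

section
/- For each m, the coefficient of q^m in (1/(q;q)_∞) Σ_{n=1}^∞ (-1)^{n-1} q^{3n(n+1)/2} equals ge(m), the number of partitions of m whose rank is at most -2 (Garden of Eden partitions). -/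
open PowerSeries Finset

/-!
Write `g_k(n)` for the number of partitions of `n` with rank at most `-k`. Dyson's map removes
the first column of the Ferrers diagram, of length `ℓ`, and adds a part `ℓ - k - 1`; it is a
bijection from the partitions of `m + k + 1` with rank `≤ -k` onto the partitions of `m` with
rank `≥ -k - 2`. Hence `g_k(m + k + 1) = p(m) - g_{k+3}(m)`, and as `g_k(n) = 0` for `n ≤ k`,
the generating functions satisfy `G_k = q^(k+1) (P - G_{k+3})` for `k ≥ 1`, where
`P = 1/(q;q)_∞`. This recursion determines `G_k` coefficient by coefficient, and
`P · ∑ (-1)^n q^(D k n)` satisfies it too when `D k 0 = k + 1` and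
`D k (n + 1) = k + 1 + D (k + 3) n`. Finally `D 2 n = 3 (n + 1) (n + 2) / 2`.
-/

namespace Multiset

lemma sup_mem_of_ne_zero_s13 {s : Multiset ℕ} (h : s ≠ 0) : s.sup ∈ s := by
  obtain ⟨y, hy, hmax⟩ := s.exists_max_image id h
  rwa [le_antisymm (Multiset.sup_le.2 hmax) (le_sup hy)]

lemma sum_filter_ne_zero (s : Multiset ℕ) : (s.filter (· ≠ 0)).sum = s.sum := by
  conv_rhs => rw [← filter_add_not (· ≠ 0) s]
  simp +contextual [sum_eq_zero]

lemma map_pred_add_one {s : Multiset ℕ} (h : ∀ x ∈ s, 0 < x) :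
    (s.map (· - 1)).map (· + 1) = s := by
  rw [map_map]
  conv_rhs => rw [← map_id s]
  exact map_congr rfl fun x hx => Nat.sub_add_cancel (h x hx)

lemma sum_map_succ (s : Multiset ℕ) : (s.map (· + 1)).sum = s.sum + card s := by
  simp [sum_map_add]

lemma sum_map_pred_add_card {s : Multiset ℕ} (h : ∀ x ∈ s, 0 < x) :
    (s.map (· - 1)).sum + card s = s.sum := by
  conv_rhs => rw [← map_pred_add_one h]
  rw [sum_map_succ, card_map]

lemma map_succ_filter_map_pred {s : Multiset ℕ} (h : ∀ x ∈ s, 0 < x) :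
    ((s.map (· - 1)).filter (· ≠ 0)).map (· + 1) = s.filter (· ≠ 1) := by
  rw [filter_map, map_map]
  conv_rhs => rw [← map_id (s.filter _)]
  refine map_congr (filter_congr fun x hx => ?_) fun x hx => ?_
  · have := h x hx
    simp only [Function.comp_apply]
    omega
  · exact Nat.sub_add_cancel (h x (mem_of_mem_filter hx))

def dysonMap (k : ℕ) (s : Multiset ℕ) : Multiset ℕ :=
  ((card s - (k + 1)) ::ₘ s.map (· - 1)).filter (· ≠ 0)

/-- Inverse of `dysonMap k`: remove the largest part `a` and add a first column of length
`a + k + 1`. -/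
def dysonInv (k : ℕ) (s : Multiset ℕ) : Multiset ℕ :=
  (s.erase s.sup).map (· + 1) + replicate (s.sup + k + 1 - card (s.erase s.sup)) 1

section dysonMap

variable {k : ℕ} {s : Multiset ℕ}

lemma pos_of_mem_dysonMap : ∀ x ∈ dysonMap k s, 0 < x := fun _ hx =>
  Nat.pos_of_ne_zero (mem_filter.1 hx).2

lemma card_dysonMap_le : card (dysonMap k s) ≤ card s + 1 := by
  simpa [dysonMap] using
    card_le_card (filter_le (· ≠ 0) ((card s - (k + 1)) ::ₘ s.map (· - 1)))

variable (hrank : s.sup + k ≤ card s)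
include hrank

lemma sup_dysonMap : (dysonMap k s).sup = card s - (k + 1) := by
  refine le_antisymm (Multiset.sup_le.2 fun x hx => ?_) ?_
  · rcases mem_cons.1 (mem_of_mem_filter hx) with rfl | hx
    · rfl
    · obtain ⟨y, hy, rfl⟩ := mem_map.1 hx
      have := le_sup hy
      omega
  · rcases Nat.eq_zero_or_pos (card s - (k + 1)) with h | h
    · omega
    · exact le_sup (mem_filter.2 ⟨mem_cons_self _ _, h.ne'⟩)

variable (hpos : ∀ x ∈ s, 0 < x) (hne : s ≠ 0)
include hpos hne

lemma add_one_le_card : k + 1 ≤ card s := by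
  have := hpos _ (sup_mem_of_ne_zero_s13 hne)
  omega

lemma sum_dysonMap : (dysonMap k s).sum + (k + 1) = s.sum := by
  have := add_one_le_card hrank hpos hne
  have := sum_map_pred_add_card hpos
  rw [dysonMap, sum_filter_ne_zero, sum_cons]
  omega

lemma dysonInv_dysonMap : dysonInv k (dysonMap k s) = s := by
  have hcard := add_one_le_card hrank hpos hne
  set t := (s.map (· - 1)).filter (· ≠ 0)
  have herase : (dysonMap k s).erase (dysonMap k s).sup = t := by
    rw [sup_dysonMap hrank, dysonMap, filter_cons]
    split_ifs with h
    · rw [singleton_add, erase_cons_head]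
    · rw [zero_add, of_not_not h, erase_of_notMem (by simp)]
  have hcard_t : card t + count 1 s = card s := by
    rw [← card_map (· + 1), map_succ_filter_map_pred hpos, ← card_replicate (count 1 s) 1,
      ← filter_eq', ← card_add, add_comm]
    simpa using congrArg card (filter_add_not (· = 1) s)
  rw [dysonInv, herase, sup_dysonMap hrank, map_succ_filter_map_pred hpos,
    show card s - (k + 1) + k + 1 - card t = count 1 s by omega, ← filter_eq', add_comm]
  simpa using filter_add_not (· = 1) s

end dysonMap

section dysonInv

variable {k : ℕ} {s : Multiset ℕ}

lemma pos_of_mem_dysonInv : ∀ x ∈ dysonInv k s, 0 < x := by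
  intro x hx
  rcases mem_add.1 hx with h | h
  · obtain ⟨y, -, rfl⟩ := mem_map.1 h
    omega
  · rw [eq_of_mem_replicate h]
    omega

lemma sup_dysonInv_le : (dysonInv k s).sup ≤ s.sup + 1 := by
  refine Multiset.sup_le.2 fun x hx => ?_
  rcases mem_add.1 hx with h | h
  · obtain ⟨y, hy, rfl⟩ := mem_map.1 h
    have := le_sup (mem_of_mem_erase hy)
    omega
  · rw [eq_of_mem_replicate h]
    omega

variable (hrank : card s ≤ s.sup + k + 2)
include hrank

lemma card_erase_sup_le : card (s.erase s.sup) ≤ s.sup + k + 1 := by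
  rcases eq_or_ne s 0 with rfl | hne
  · simp
  · rw [card_erase_of_mem (sup_mem_of_ne_zero_s13 hne), Nat.pred_eq_sub_one]
    omega

lemma card_dysonInv : card (dysonInv k s) = s.sup + k + 1 := by
  have := card_erase_sup_le hrank
  rw [dysonInv, card_add, card_map, card_replicate]
  omega

lemma sum_dysonInv : (dysonInv k s).sum = s.sum + (k + 1) := by
  have := card_erase_sup_le hrank
  have hsum : (s.erase s.sup).sum + s.sup = s.sum := by
    rcases eq_or_ne s 0 with rfl | hne
    · simp
    · conv_rhs => rw [← cons_erase (sup_mem_of_ne_zero_s13 hne)]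
      rw [sum_cons, add_comm]
  rw [dysonInv, sum_add, sum_map_succ, sum_replicate, smul_eq_mul, mul_one]
  omega

lemma dysonMap_dysonInv (hpos : ∀ x ∈ s, 0 < x) : dysonMap k (dysonInv k s) = s := by
  have hmap : (dysonInv k s).map (· - 1) =
      s.erase s.sup + replicate (s.sup + k + 1 - card (s.erase s.sup)) 0 := by
    rw [dysonInv, map_add, map_map, map_replicate]
    simp
  have herase : (s.erase s.sup).filter (· ≠ 0) = s.erase s.sup :=
    filter_eq_self.2 fun x hx => (hpos x (mem_of_mem_erase hx)).ne'
  rw [dysonMap, card_dysonInv hrank, hmap, filter_cons, filter_add, herase,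
    filter_eq_nil.2 fun x hx => by simp [eq_of_mem_replicate hx], add_zero,
    show s.sup + k + 1 - (k + 1) = s.sup by omega]
  rcases eq_or_ne s 0 with rfl | hne
  · simp
  · have hsup := sup_mem_of_ne_zero_s13 hne
    rw [if_pos (hpos _ hsup).ne', singleton_add, cons_erase hsup]

end dysonInv

end Multiset

lemma rank_le_neg_iff {n : ℕ} (P : n.Partition) (k : ℕ) :
    rank P ≤ -(k : ℤ) ↔ P.parts.sup + k ≤ Multiset.card P.parts := by
  unfold rank
  omega

lemma neg_le_rank_iff {n : ℕ} (P : n.Partition) (k : ℕ) :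
    -((k : ℤ) + 2) ≤ rank P ↔ Multiset.card P.parts ≤ P.parts.sup + k + 2 := by
  unfold rank
  omega

def dysonEquiv (k m : ℕ) :
    {P : (m + k + 1).Partition // rank P ≤ -(k : ℤ)} ≃
      {Q : m.Partition // -((k : ℤ) + 2) ≤ rank Q} where
  toFun P :=
    have hrank := (rank_le_neg_iff P.1 k).1 P.2
    have hne : P.1.parts ≠ 0 := fun h => by simpa [h] using P.1.parts_sum
    ⟨⟨Multiset.dysonMap k P.1.parts, Multiset.pos_of_mem_dysonMap _, by
      have := Multiset.sum_dysonMap hrank (fun _ => P.1.parts_pos) hne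
      have := P.1.parts_sum
      omega⟩, by
      rw [neg_le_rank_iff]
      have := Multiset.sup_dysonMap hrank
      have := Multiset.card_dysonMap_le (k := k) (s := P.1.parts)
      have := Multiset.add_one_le_card hrank (fun _ => P.1.parts_pos) hne
      dsimp only
      omega⟩
  invFun Q :=
    have hrank := (neg_le_rank_iff Q.1 k).1 Q.2
    ⟨⟨Multiset.dysonInv k Q.1.parts, Multiset.pos_of_mem_dysonInv _, by
      rw [Multiset.sum_dysonInv hrank, Q.1.parts_sum]
      ring⟩, by
      rw [rank_le_neg_iff]
      have := Multiset.card_dysonInv hrank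
      have := Multiset.sup_dysonInv_le (k := k) (s := Q.1.parts)
      dsimp only
      omega⟩
  left_inv P := by
    have hne : P.1.parts ≠ 0 := fun h => by simpa [h] using P.1.parts_sum
    exact Subtype.ext <| Nat.Partition.ext <| Multiset.dysonInv_dysonMap
      ((rank_le_neg_iff P.1 k).1 P.2) (fun _ => P.1.parts_pos) hne
  right_inv Q := Subtype.ext <| Nat.Partition.ext <|
    Multiset.dysonMap_dysonInv ((neg_le_rank_iff Q.1 k).1 Q.2) (fun _ => Q.1.parts_pos)

noncomputable def rankLeCount (k n : ℕ) : ℕ :=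
  Nat.card {P : n.Partition // rank P ≤ -(k : ℤ)}

lemma rankLeCount_add_rankLeCount (k m : ℕ) :
    rankLeCount k (m + k + 1) + rankLeCount (k + 3) m = p m := by
  have hcompl : {P : m.Partition // rank P ≤ -((k + 3 : ℕ) : ℤ)} ≃
      {P : m.Partition // ¬ -((k : ℤ) + 2) ≤ rank P} :=
    Equiv.subtypeEquivRight fun P => by push_cast; omega
  rw [rankLeCount, rankLeCount, p, Nat.card_congr (dysonEquiv k m), Nat.card_congr hcompl,
    ← Nat.card_sum, Nat.card_congr (Equiv.sumCompl _)]

lemma rankLeCount_two (n : ℕ) : rankLeCount 2 n = gePart n := rfl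

lemma rankLeCount_eq_zero {k n : ℕ} (hk : 1 ≤ k) (hn : n ≤ k) : rankLeCount k n = 0 := by
  rw [rankLeCount, Nat.card_eq_zero]
  left
  refine ⟨fun ⟨P, hP⟩ => ?_⟩
  rw [rank_le_neg_iff] at hP
  have := Multiset.sum_map_pred_add_card (fun _ => P.parts_pos)
  have := P.parts_sum
  rcases eq_or_ne P.parts 0 with h | h
  · simp only [h, Multiset.sup_zero, bot_eq_zero', Multiset.card_zero] at hP
    omega
  · have := P.parts_pos (Multiset.sup_mem_of_ne_zero_s13 h)
    omega

/-- The topology on `PowerSeries ℚ` is the pointwise one, that of `PowerSeries.WithPiTopology`. -/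
instance : T2Space (PowerSeries ℚ) := WithPiTopology.instT2Space ℚ

instance : IsTopologicalRing (PowerSeries ℚ) := WithPiTopology.instIsTopologicalRing ℚ

lemma hasProd_E : HasProd (fun i : ℕ => 1 - (X : PowerSeries ℚ) ^ (i + 1)) E :=
  (WithPiTopology.multipliable_one_sub_X_pow ℚ).hasProd

lemma one_sub_X_pow_mul_one_add_tsum {k : ℕ} (hk : k ≠ 0) :
    (1 - X ^ k) * (1 + ∑' j : ℕ, (1 : ℚ) • (X : PowerSeries ℚ) ^ (k * (j + 1))) = 1 := by
  have hX : constantCoeff ((X : PowerSeries ℚ) ^ k) = 0 := by simp [hk]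
  have hsum : Summable fun j : ℕ => ((X : PowerSeries ℚ) ^ k) ^ j :=
    WithPiTopology.summable_pow_of_constantCoeff_eq_zero hX
  have hgeom : 1 + ∑' j : ℕ, (1 : ℚ) • (X : PowerSeries ℚ) ^ (k * (j + 1)) =
      ∑' j : ℕ, ((X : PowerSeries ℚ) ^ k) ^ j := by
    rw [hsum.tsum_eq_zero_add]
    simp [pow_mul]
  rw [hgeom]
  exact WithPiTopology.one_sub_mul_tsum_pow_of_constantCoeff_eq_zero hX

noncomputable def partitionGenFun : PowerSeries ℚ := PowerSeries.mk fun n => (p n : ℚ)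

lemma E_mul_partitionGenFun : E * partitionGenFun = 1 := by
  have hgen : Nat.Partition.genFun (fun _ _ => (1 : ℚ)) = partitionGenFun := by
    ext n
    simp [partitionGenFun, p, Nat.card_eq_fintype_card]
  have h : HasProd (fun i : ℕ => (1 - X ^ (i + 1)) *
      (1 + ∑' j : ℕ, (1 : ℚ) • (X : PowerSeries ℚ) ^ ((i + 1) * (j + 1))))
      (E * Nat.Partition.genFun (fun _ _ => (1 : ℚ))) :=
    hasProd_E.mul (Nat.Partition.hasProd_genFun (R := ℚ) fun _ _ => 1)
  simp only [one_sub_X_pow_mul_one_add_tsum (Nat.succ_ne_zero _)] at h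
  rw [← hgen]
  exact h.unique hasProd_one

lemma inv_E : E⁻¹ = partitionGenFun := by
  have h := E_mul_partitionGenFun
  rw [PowerSeries.inv_eq_iff_mul_eq_one, mul_comm, h]
  intro h0
  simpa [h0] using congrArg constantCoeff h

open Filter in
lemma summable_smul_X_pow (c : ℕ → ℚ) {e : ℕ → ℕ} (he : Tendsto e atTop atTop) :
    Summable fun n => c n • (X : PowerSeries ℚ) ^ e n := by
  refine WithPiTopology.summable_of_tendsto_order_atTop_nhds_top ℚ
    (ENat.tendsto_nhds_top_iff_natCast_lt.2 fun N => ?_)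
  filter_upwards [he.eventually_gt_atTop N] with n hn
  calc (N : ℕ∞) < e n := by exact_mod_cast hn
    _ = (X ^ e n : PowerSeries ℚ).order := (order_X_pow _).symm
    _ ≤ _ := le_order_smul

def dysonExponent : ℕ → ℕ → ℕ
  | k, 0 => k + 1
  | k, n + 1 => k + 1 + dysonExponent (k + 3) n

lemma lt_dysonExponent (k n : ℕ) : n < dysonExponent k n := by
  induction n generalizing k with
  | zero => simp [dysonExponent]
  | succ n ih =>
    have := ih (k + 3)
    rw [dysonExponent]
    omega

lemma two_mul_dysonExponent (k n : ℕ) :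
    2 * dysonExponent k n = (n + 1) * (2 * k + 2 + 3 * n) := by
  induction n generalizing k with
  | zero =>
    rw [dysonExponent]
    ring
  | succ n ih =>
    rw [dysonExponent, mul_add, ih]
    ring

lemma dysonExponent_two (n : ℕ) : dysonExponent 2 n = 3 * (n + 1) * (n + 2) / 2 := by
  have := two_mul_dysonExponent 2 n
  have : (n + 1) * (2 * 2 + 2 + 3 * n) = 3 * (n + 1) * (n + 2) := by ring
  omega

noncomputable def dysonSeries (k : ℕ) : PowerSeries ℚ :=
  ∑' n : ℕ, ((-1 : ℚ) ^ n) • X ^ dysonExponent k n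

lemma summable_dysonSeries (k : ℕ) :
    Summable fun n : ℕ => ((-1 : ℚ) ^ n) • (X : PowerSeries ℚ) ^ dysonExponent k n :=
  summable_smul_X_pow _ <|
    Filter.tendsto_atTop_mono (fun n => (lt_dysonExponent k n).le) Filter.tendsto_id

lemma dysonSeries_eq (k : ℕ) : dysonSeries k = X ^ (k + 1) * (1 - dysonSeries (k + 3)) := by
  have hterm : ∀ n : ℕ,
      ((-1 : ℚ) ^ (n + 1)) • (X : PowerSeries ℚ) ^ dysonExponent k (n + 1) =
        X ^ (k + 1) * -(((-1 : ℚ) ^ n) • X ^ dysonExponent (k + 3) n) := by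
    intro n
    rw [dysonExponent, pow_succ, mul_neg_one, neg_smul, pow_add, ← mul_smul_comm, mul_neg]
  rw [dysonSeries, (summable_dysonSeries k).tsum_eq_zero_add]
  simp only [hterm, (summable_dysonSeries (k + 3)).neg.tsum_mul_left, tsum_neg]
  simp only [pow_zero, dysonExponent, one_smul, mul_neg, dysonSeries]
  ring

lemma eq_of_eq_X_pow_mul_sub {R : Type*} [CommRing R] {c : PowerSeries R}
    {F G : ℕ → PowerSeries R}
    (hF : ∀ k, 1 ≤ k → F k = X ^ (k + 1) * (c - F (k + 3)))
    (hG : ∀ k, 1 ≤ k → G k = X ^ (k + 1) * (c - G (k + 3))) {k : ℕ} (hk : 1 ≤ k) :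
    F k = G k := by
  ext m
  induction m using Nat.strong_induction_on generalizing k with
  | _ m ih =>
    rw [hF k hk, hG k hk, coeff_X_pow_mul', coeff_X_pow_mul']
    split_ifs
    · rw [map_sub, map_sub, ih (m - (k + 1)) (by omega) (by omega)]
    · rfl

noncomputable def rankLeSeries (k : ℕ) : PowerSeries ℚ := mk fun n => (rankLeCount k n : ℚ)

lemma rankLeSeries_eq {k : ℕ} (hk : 1 ≤ k) :
    rankLeSeries k = X ^ (k + 1) * (partitionGenFun - rankLeSeries (k + 3)) := by
  ext n
  rw [coeff_X_pow_mul']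
  split_ifs with hn
  · obtain ⟨m, rfl⟩ := Nat.exists_eq_add_of_le' hn
    simp only [Nat.add_sub_cancel, map_sub, rankLeSeries, partitionGenFun, coeff_mk]
    rw [← rankLeCount_add_rankLeCount k m, ← add_assoc]
    push_cast
    ring
  · simp [rankLeSeries, rankLeCount_eq_zero hk (by omega : n ≤ k)]

lemma partitionGenFun_mul_dysonSeries {k : ℕ} (hk : 1 ≤ k) :
    partitionGenFun * dysonSeries k = rankLeSeries k :=
  eq_of_eq_X_pow_mul_sub (F := fun k => partitionGenFun * dysonSeries k)
    (fun k _ => by rw [dysonSeries_eq]; ring) (fun _ => rankLeSeries_eq) hk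

theorem stmt13 (m : ℕ) :
    (PowerSeries.coeff m)
        (E⁻¹ * ∑' n : ℕ,
          ((-1 : ℚ) ^ n) • (X : PowerSeries ℚ) ^ (3 * (n + 1) * (n + 2) / 2)) =
      (gePart m : ℚ) := by
  simp_rw [← dysonExponent_two]
  rw [inv_E, ← dysonSeries, partitionGenFun_mul_dysonSeries (by norm_num), rankLeSeries,
    coeff_mk, rankLeCount_two]
end
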